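/- Let P be a two-orbit j-intransitive convex d-polytope, let G be a k-face and F an l-face of P with F ≤ G. If j ≤ l or k ≤ j, then the section G/F is a regular polytope. In particular, every i-face of P with i ≤ j is a regular polytope. -/

import Mathlib

open scoped RealInnerProductSpace Pointwise

noncomputable section

/-- Euclidean `d`-space. -/
abbrev E (d : ℕ) := EuclideanSpace ℝ (Fin d)

/-- A convex `d`-polytope: the convex hull of a finite set of points in Euclidean
`d`-space whose affine hull is the whole space. -/
def IsConvexPolytope (d : ℕ) (P : Set (E d)) : Prop :=
  (∃ S : Finset (E d), P = convexHull ℝ (S : Set (E d))) ∧ affineSpan ℝ P = ⊤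

/-- The faces of `P`: the intersections of `P` with supporting hyperplanes, together
with the empty set and `P` itself; these are exactly the exposed faces of `P`. -/
def Faces (d : ℕ) (P : Set (E d)) : Type := {F : Set (E d) // IsExposed ℝ P F}

instance (d : ℕ) (P : Set (E d)) : PartialOrder (Faces d P) :=
  Subtype.partialOrder _

/-- A flag of `P`: a maximal chain in the face lattice of `P`. -/
abbrev PolyFlag (d : ℕ) (P : Set (E d)) := Flag (Faces d P)

/-- `g` is a symmetry of `P`: a Euclidean isometry carrying `P` onto itself. -/
def IsSymmetry (d : ℕ) (P : Set (E d)) (g : E d ≃ᵢ E d) : Prop := g '' P = P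

/-- The collection of faces (as subsets of space) obtained by applying `g` to the
faces of the flag `Φ`. -/
def flagImage (d : ℕ) (P : Set (E d)) (g : E d ≃ᵢ E d) (Φ : PolyFlag d P) :
    Set (Set (E d)) :=
  (fun F : Set (E d) => g '' F) '' (Subtype.val '' (Φ : Set (Faces d P)))

/-- Two flags lie in the same orbit of the symmetry group `G(P)`. -/
def FlagEquiv (d : ℕ) (P : Set (E d)) (Φ Ψ : PolyFlag d P) : Prop :=
  ∃ g : E d ≃ᵢ E d, IsSymmetry d P g ∧
    flagImage d P g Φ = Subtype.val '' (Ψ : Set (Faces d P))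

/-- `P` is a two-orbit polytope: the symmetry group has exactly two orbits on flags. -/
def IsTwoOrbit (d : ℕ) (P : Set (E d)) : Prop :=
  ∃ Φ Ψ : PolyFlag d P, ¬ FlagEquiv d P Φ Ψ ∧
    ∀ Ω : PolyFlag d P, FlagEquiv d P Ω Φ ∨ FlagEquiv d P Ω Ψ

/-- `F` is a face of `P` of rank `j`: the empty face has rank `-1`, and a nonempty face
has rank the dimension of its affine hull. -/
def IsFaceOfRank (d : ℕ) (P : Set (E d)) (F : Set (E d)) (j : ℤ) : Prop :=
  IsExposed ℝ P F ∧
    ((j = -1 ∧ F = ∅) ∨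
      (F.Nonempty ∧ j = Module.finrank ℝ (affineSpan ℝ F).direction))

/-- The symmetry group of `P` is transitive on the faces of rank `j`. -/
def TransitiveOnRank (d : ℕ) (P : Set (E d)) (j : ℤ) : Prop :=
  ∀ F G : Set (E d), IsFaceOfRank d P F j → IsFaceOfRank d P G j →
    ∃ g : E d ≃ᵢ E d, IsSymmetry d P g ∧ g '' F = G

/-- `P` is a two-orbit `j`-intransitive polytope: it has exactly two flag orbits, its
symmetry group is not transitive on the `j`-faces, but is transitive on the `i`-faces
for every `i ≠ j` with `0 ≤ i ≤ d - 1`. -/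
def IsJIntransitive (d : ℕ) (P : Set (E d)) (j : ℤ) : Prop :=
  IsTwoOrbit d P ∧ ¬ TransitiveOnRank d P j ∧
    ∀ i : ℤ, 0 ≤ i → i ≤ (d : ℤ) - 1 → i ≠ j → TransitiveOnRank d P i

/-- A regular polytope: the group of ambient isometries carrying `Q` onto itself is
transitive on the flags of `Q`. -/
def IsRegularSet (d : ℕ) (Q : Set (E d)) : Prop :=
  ∀ Φ Ψ : PolyFlag d Q, FlagEquiv d Q Φ Ψ

/-- The faces of the section `G/F` of `P`: the faces of `P` lying between `F`
and `G`. -/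
def SectionFaces (d : ℕ) (P F G : Set (E d)) : Type :=
  {H : Set (E d) // IsExposed ℝ P H ∧ F ⊆ H ∧ H ⊆ G}

instance (d : ℕ) (P F G : Set (E d)) : PartialOrder (SectionFaces d P F G) :=
  Subtype.partialOrder _

/-- A flag of the section `G/F`: a maximal chain of faces of `P` between `F` and `G`. -/
abbrev SectionFlag (d : ℕ) (P F G : Set (E d)) := Flag (SectionFaces d P F G)

/-! Fix a flag of `P` through `F` and `G` and splice two flags of `G/F` into it. The two flags of
`P` so obtained agree outside `G/F`, in particular on their `j`-faces, since a face strictly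
between `F` and `G` has rank strictly between `l` and `k`. In a two-orbit polytope whose symmetry
group is not transitive on `j`-faces, two flags with the same `j`-face are equivalent: otherwise
they would represent both flag orbits, and every `j`-face could be moved onto their common one.
A symmetry relating the two spliced flags fixes the faces they share, in particular `F` and `G`,
so it carries one flag of `G/F` onto the other.

The faces of a face `A` of a polytope are the faces of the polytope contained in `A`, so the
second assertion is the case `F = ∅`, `G = Fi` of the first. -/

open Set

section

variable {V : Type*} [NormedAddCommGroup V] [NormedSpace ℝ V]

open Classical in
def faceRank (H : Set V) : ℤ :=
  if H.Nonempty then Module.finrank ℝ (vectorSpan ℝ H) else -1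

theorem faceRank_of_nonempty {H : Set V} (hH : H.Nonempty) :
    faceRank H = Module.finrank ℝ (vectorSpan ℝ H) := if_pos hH

@[simp]
theorem faceRank_empty : faceRank (∅ : Set V) = -1 := if_neg Set.not_nonempty_empty

theorem faceRank_mono [FiniteDimensional ℝ V] {A B : Set V} (hAB : A ⊆ B) :
    faceRank A ≤ faceRank B := by
  rcases A.eq_empty_or_nonempty with rfl | hA
  · rcases B.eq_empty_or_nonempty with rfl | hB
    · rfl
    · rw [faceRank_empty, faceRank_of_nonempty hB]; omega
  · rw [faceRank_of_nonempty hA, faceRank_of_nonempty (hA.mono hAB)]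
    exact_mod_cast Submodule.finrank_mono (vectorSpan_mono ℝ hAB)

theorem faceRank_image (g : V ≃ᵢ V) (H : Set V) : faceRank (g '' H) = faceRank H := by
  rcases H.eq_empty_or_nonempty with rfl | hH
  · simp
  · let f := g.toRealAffineIsometryEquiv.toAffineEquiv
    have hf : f.toAffineMap '' H = g '' H := by
      rw [← g.coeFn_toRealAffineIsometryEquiv]; rfl
    rw [faceRank_of_nonempty hH, faceRank_of_nonempty (hH.image g), ← hf,
      ← AffineMap.map_vectorSpan]
    exact_mod_cast f.linear.finrank_map_eq _

/-- A functional exposing `A` in `B` is constant on the affine hull of `A`, which contains `B`, so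
it is maximal on all of `B`. -/
theorem IsExposed.eq_of_vectorSpan_eq {A B : Set V} (hAB : IsExposed ℝ B A)
    (hA : A.Nonempty) (hspan : vectorSpan ℝ A = vectorSpan ℝ B) : A = B := by
  obtain ⟨l, hl⟩ := hAB hA
  obtain ⟨a, ha⟩ := hA
  have hmax : ∀ x ∈ A, ∀ y ∈ B, l y ≤ l x := fun x hx => (hl ▸ hx).2
  have hker : vectorSpan ℝ A ≤ LinearMap.ker (l : V →ₗ[ℝ] ℝ) := by
    refine Submodule.span_le.2 ?_
    rintro _ ⟨x, hx, y, hy, rfl⟩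
    have := le_antisymm (hmax x hx y (hAB.subset hy)) (hmax y hy x (hAB.subset hx))
    simp [vsub_eq_sub, this]
  refine hAB.subset.antisymm fun x hx => ?_
  have hxa : l (x - a) = 0 := hker (hspan ▸ vsub_mem_vectorSpan ℝ hx (hAB.subset ha))
  rw [map_sub, sub_eq_zero] at hxa
  rw [hl]
  exact ⟨hx, fun y hy => hxa ▸ hmax a ha y hy⟩

theorem IsExposed.eq_of_faceRank_eq [FiniteDimensional ℝ V] {P A B : Set V}
    (hA : IsExposed ℝ P A) (hB : IsExposed ℝ P B) (hAB : A ⊆ B)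
    (hrank : faceRank A = faceRank B) : A = B := by
  rcases A.eq_empty_or_nonempty with rfl | hAne
  · rcases B.eq_empty_or_nonempty with rfl | hBne
    · rfl
    · rw [faceRank_empty, faceRank_of_nonempty hBne] at hrank; omega
  · refine (hA.mono hB.subset hAB).eq_of_vectorSpan_eq hAne
      (Submodule.eq_of_le_of_finrank_eq (vectorSpan_mono ℝ hAB) ?_)
    rw [faceRank_of_nonempty hAne, faceRank_of_nonempty (hAne.mono hAB)] at hrank
    exact_mod_cast hrank

end

section

open Filter Topology

variable {V : Type*} [NormedAddCommGroup V] [NormedSpace ℝ V]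

/-- By Krein–Milman, an exposed face `B` is the convex hull of its extreme points, which are
extreme points of `convexHull ℝ S` and hence lie in `S`. -/
theorem IsExposed.eq_convexHull_inter {S B : Set V} (hS : S.Finite)
    (hB : IsExposed ℝ (convexHull ℝ S) B) : B = convexHull ℝ (B ∩ S) := by
  have hBc : IsCompact B := hB.isCompact (hS.isCompact_convexHull ℝ)
  have hBconv : Convex ℝ B := hB.convex (convex_convexHull ℝ S)
  refine subset_antisymm ?_ (convexHull_min inter_subset_left hBconv)
  have hext : B.extremePoints ℝ ⊆ B ∩ S := fun x hx =>
    ⟨hx.1, extremePoints_convexHull_subset (hB.isExtreme.extremePoints_subset_extremePoints hx)⟩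
  calc B = closure (convexHull ℝ (B.extremePoints ℝ)) :=
        (closure_convexHull_extremePoints hBc hBconv).symm
    _ ⊆ closure (convexHull ℝ (B ∩ S)) := closure_mono (convexHull_mono hext)
    _ = convexHull ℝ (B ∩ S) :=
        ((hS.subset inter_subset_right).isCompact_convexHull ℝ).isClosed.closure_eq

theorem exists_pos_forall_add_mul_lt {ι : Type*} {T : Set ι} (hT : T.Finite) {f g : ι → ℝ}
    {c d : ℝ} (h : ∀ i ∈ T, f i < c) : ∃ ε > 0, ∀ i ∈ T, f i + ε * g i < c + ε * d := by
  have hcont : ∀ u v : ℝ, Continuous fun ε : ℝ => u + ε * v := fun u v => by fun_prop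
  have hev : ∀ᶠ ε in 𝓝 (0 : ℝ), ∀ i ∈ T, f i + ε * g i < c + ε * d :=
    hT.eventually_all.2 fun i hi => ((hcont _ _).tendsto 0).eventually_lt
      ((hcont _ _).tendsto 0) (by simpa using h i hi)
  obtain ⟨ε, hε, hεpos⟩ := ((hev.filter_mono nhdsWithin_le_nhds).and
    (self_mem_nhdsWithin : Ioi (0 : ℝ) ∈ 𝓝[>] 0)).exists
  exact ⟨ε, hεpos, hε⟩

/-- Both sides are faces of the polytope `convexHull ℝ S` with the same vertices. -/
theorem eq_setOf_forall_le_of_lt_of_notMem {S B : Set V} (hS : S.Finite)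
    (hB : B = convexHull ℝ (B ∩ S)) (l : StrongDual ℝ V) {b : V} (hb : b ∈ B)
    (hlB : ∀ x ∈ B, l x = l b) (hlS : ∀ s ∈ S, s ∉ B → l s < l b) :
    B = {x ∈ convexHull ℝ S | ∀ y ∈ convexHull ℝ S, l y ≤ l x} := by
  set B' := {x ∈ convexHull ℝ S | ∀ y ∈ convexHull ℝ S, l y ≤ l x}
  have hle : ∀ y ∈ convexHull ℝ S, l y ≤ l b :=
    convexHull_min (fun s hs => by
      by_cases hsB : s ∈ B
      · exact (hlB s hsB).le
      · exact (hlS s hs hsB).le) (convex_halfSpace_le l.toLinearMap.isLinear _)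
  have hbK : b ∈ convexHull ℝ S := by
    rw [hB] at hb; exact convexHull_mono inter_subset_right hb
  have hverts : B ∩ S = B' ∩ S := by
    ext s
    refine ⟨fun ⟨hsB, hsS⟩ => ⟨⟨subset_convexHull ℝ S hsS, fun y hy => (hlB s hsB).symm ▸
      hle y hy⟩, hsS⟩, fun ⟨hsB', hsS⟩ => ⟨?_, hsS⟩⟩
    by_contra hsB
    exact (hlS s hsS hsB).not_ge (hsB'.2 b hbK)
  have hB' : IsExposed ℝ (convexHull ℝ S) B' := fun _ => ⟨l, rfl⟩
  rw [hB, hverts, ← hB'.eq_convexHull_inter hS]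

theorem forall_le_and_mem_iff_of_eq_argmax {A B : Set V} {l : StrongDual ℝ V}
    (hl : B = {x ∈ A | ∀ y ∈ A, l y ≤ l x}) {b : V} (hb : b ∈ B) :
    (∀ y ∈ A, l y ≤ l b) ∧ ∀ x ∈ A, x ∈ B ↔ l b ≤ l x := by
  have hle : ∀ y ∈ A, l y ≤ l b := (hl ▸ hb).2
  refine ⟨hle, fun x hx => ?_⟩
  rw [hl]
  exact ⟨fun h => h.2 b (hl ▸ hb).1, fun h => ⟨hx, fun y hy => (hle y hy).trans h⟩⟩

/-- If `l₁` exposes `A` and `l₂` exposes `B` in `A`, then `l₁ + ε • l₂` exposes `B` for small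
`ε > 0`: only finitely many vertices have to be kept below the level of `B`. -/
theorem IsExposed.trans_of_convexHull {S A B : Set V} (hS : S.Finite)
    (hA : IsExposed ℝ (convexHull ℝ S) A) (hB : IsExposed ℝ A B) :
    IsExposed ℝ (convexHull ℝ S) B := by
  rintro ⟨b, hb⟩
  have hbA : b ∈ A := hB.subset hb
  obtain ⟨l₁, hl₁⟩ := hA ⟨b, hbA⟩
  obtain ⟨l₂, hl₂⟩ := hB ⟨b, hb⟩
  obtain ⟨hle₁, hiff₁⟩ := forall_le_and_mem_iff_of_eq_argmax hl₁ hbA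
  obtain ⟨hle₂, hiff₂⟩ := forall_le_and_mem_iff_of_eq_argmax hl₂ hb
  have hAS : A = convexHull ℝ (A ∩ S) := hA.eq_convexHull_inter hS
  have hBS : B = convexHull ℝ (B ∩ S) := by
    have := (hAS ▸ hB).eq_convexHull_inter (hS.subset inter_subset_right)
    rwa [← inter_assoc, inter_eq_left.2 hB.subset] at this
  obtain ⟨ε, hε, hεS⟩ := exists_pos_forall_add_mul_lt (hS.subset sdiff_subset)
    (f := fun s => l₁ s) (g := fun s => l₂ s) (c := l₁ b) (d := l₂ b) fun s hs =>
      lt_of_le_not_ge (hle₁ s (subset_convexHull ℝ S hs.1))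
        fun h => hs.2 ((hiff₁ s (subset_convexHull ℝ S hs.1)).2 h)
  refine ⟨l₁ + ε • l₂, eq_setOf_forall_le_of_lt_of_notMem hS hBS _ hb (fun x hx => ?_) ?_⟩
  · have hxA := hB.subset hx
    have h₁ := le_antisymm (hle₁ x (hA.subset hxA)) ((hiff₁ x (hA.subset hxA)).1 hxA)
    have h₂ := le_antisymm (hle₂ x hxA) ((hiff₂ x hxA).1 hx)
    simp [h₁, h₂]
  · intro s hs hsB
    have hsK := subset_convexHull ℝ S hs
    by_cases hsA : s ∈ A
    · have h₁ := le_antisymm (hle₁ s hsK) ((hiff₁ s hsK).1 hsA)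
      have h₂ : l₂ s < l₂ b := lt_of_le_not_ge (hle₂ s hsA) fun h => hsB ((hiff₂ s hsA).2 h)
      simpa [h₁] using mul_lt_mul_of_pos_left h₂ hε
    · simpa using hεS s ⟨hs, hsA⟩

end

section

variable {α β : Type*} [PartialOrder α] [PartialOrder β]

theorem eq_or_eq_of_mem_Icc_of_notMem_Ioo {a b x : α} (hx : x ∈ Icc a b) (hx' : x ∉ Ioo a b) :
    x = a ∨ x = b := by
  have : x ∈ ({a, b} : Set α) := Icc_sdiff_Ioo_same (hx.1.trans hx.2) ▸ ⟨hx, hx'⟩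
  simpa using this

theorem Flag.le_or_ge_of_mem_sdiff_Ioo (M : Flag α) {a b x : α} (ha : a ∈ M) (hb : b ∈ M)
    (hx : x ∈ (M : Set α) \ Ioo a b) : x ≤ a ∨ b ≤ x := by
  rcases M.le_or_le hx.1 ha with hxa | hax
  · exact .inl hxa
  rcases M.le_or_le hx.1 hb with hxb | hbx
  · rcases eq_or_eq_of_mem_Icc_of_notMem_Ioo ⟨hax, hxb⟩ hx.2 with rfl | rfl
    · exact .inl le_rfl
    · exact .inr le_rfl
  · exact .inr hbx

variable {a b : α} {e : β ↪o α}

theorem Flag.mem_image_of_forall_le_or_ge (he : range e = Icc a b) (Θ : Flag β) {x : α}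
    (hx : x ∈ Icc a b) (hcmp : ∀ y ∈ e '' Θ, x ≤ y ∨ y ≤ x) : x ∈ e '' Θ := by
  obtain ⟨x, rfl⟩ := he.symm ▸ hx
  refine mem_image_of_mem _ (Flag.mem_iff_forall_le_or_ge.2 fun y hy => ?_)
  simpa only [e.le_iff_le] using hcmp _ (mem_image_of_mem _ hy)

/-- `Θ` is a flag of the interval `[a, b]`, presented through the order embedding `e` onto it. -/
theorem Flag.isMaxChain_sdiff_Ioo_union (M : Flag α) (ha : a ∈ M) (hb : b ∈ M)
    (he : range e = Icc a b) (Θ : Flag β) :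
    IsMaxChain (· ≤ ·) ((M : Set α) \ Ioo a b ∪ e '' Θ) := by
  have hIcc : e '' Θ ⊆ Icc a b := he ▸ image_subset_range _ _
  set N := (M : Set α) \ Ioo a b ∪ e '' Θ
  have hchain : IsChain (· ≤ ·) N := by
    refine isChain_union.2 ⟨M.chain_le.mono sdiff_subset, Θ.chain_le.image e, ?_⟩
    intro x hx y hy _
    rcases M.le_or_ge_of_mem_sdiff_Ioo ha hb hx with hxa | hbx
    · exact .inl (hxa.trans (hIcc hy).1)
    · exact .inr ((hIcc hy).2.trans hbx)
  have hmem : ∀ z, (∀ y ∈ N, z ≤ y ∨ y ≤ z) → z ∈ N := by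
    intro z hz
    by_cases hzab : a ≤ z ∧ z ≤ b
    · exact .inr (Flag.mem_image_of_forall_le_or_ge he Θ hzab fun y hy => hz y (.inr hy))
    have hout : z ≤ a ∨ b ≤ z := by
      rcases hz a (.inl ⟨ha, fun h => h.1.false⟩) with h | h
      · exact .inl h
      rcases hz b (.inl ⟨hb, fun h => h.2.false⟩) with h' | h'
      · exact absurd ⟨h, h'⟩ hzab
      · exact .inr h'
    have hzM : z ∈ M := Flag.mem_iff_forall_le_or_ge.2 fun y hy => by
      by_cases hyI : y ∈ Ioo a b
      · exact hout.imp (·.trans hyI.1.le) (hyI.2.le.trans ·)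
      · exact hz y (.inl ⟨hy, hyI⟩)
    exact .inl ⟨hzM, fun h => hout.elim (fun hza => (h.1.trans_le hza).false)
      (fun hbz => (h.2.trans_le hbz).false)⟩
  exact ⟨hchain, fun s hs hNs => hNs.antisymm fun z hz =>
    hmem z fun y hy => hs.total hz (hNs hy)⟩

theorem Flag.exists_sdiff_Ioo_eq_and_inter_Icc_eq (M : Flag α) (ha : a ∈ M) (hb : b ∈ M)
    (he : range e = Icc a b) (Θ : Flag β) :
    ∃ N : Flag α, (N : Set α) \ Ioo a b = (M : Set α) \ Ioo a b ∧
      (N : Set α) ∩ Icc a b = e '' Θ := by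
  have hIcc : e '' Θ ⊆ Icc a b := he ▸ image_subset_range _ _
  have hends : ∀ x ∈ Icc a b, x ∉ Ioo a b → x ∈ (M : Set α) ∩ e '' Θ := by
    intro x hx hx'
    rcases eq_or_eq_of_mem_Icc_of_notMem_Ioo hx hx' with rfl | rfl
    · exact ⟨ha, Flag.mem_image_of_forall_le_or_ge he Θ hx fun y hy => .inl (hIcc hy).1⟩
    · exact ⟨hb, Flag.mem_image_of_forall_le_or_ge he Θ hx fun y hy => .inr (hIcc hy).2⟩
  refine ⟨.ofIsMaxChain _ (M.isMaxChain_sdiff_Ioo_union ha hb he Θ), ?_, ?_⟩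
  · ext x
    simp only [Flag.coe_ofIsMaxChain, mem_sdiff, mem_union]
    exact ⟨fun ⟨h, hx⟩ => ⟨h.elim (·.1) fun h => (hends x (hIcc h) hx).1, hx⟩,
      fun ⟨h, hx⟩ => ⟨.inl ⟨h, hx⟩, hx⟩⟩
  · ext x
    simp only [Flag.coe_ofIsMaxChain, mem_inter_iff, mem_sdiff, mem_union]
    exact ⟨fun ⟨h, hx⟩ => h.elim (fun h => (hends x hx h.2).2) id,
      fun h => ⟨.inr h, hIcc h⟩⟩

end

section

variable {d : ℕ} {P : Set (E d)}

theorem IsFaceOfRank.faceRank_eq {F : Set (E d)} {j : ℤ} (h : IsFaceOfRank d P F j) :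
    faceRank F = j := by
  rcases h.2 with ⟨rfl, rfl⟩ | ⟨hF, rfl⟩
  · exact faceRank_empty
  · rw [faceRank_of_nonempty hF, direction_affineSpan]

theorem faceRank_strictMono : StrictMono fun x : Faces d P => faceRank x.1 := fun x y hxy =>
  (faceRank_mono hxy.le).lt_of_ne fun h => hxy.ne (Subtype.ext (x.2.eq_of_faceRank_eq y.2 hxy.le h))

theorem PolyFlag.eq_of_faceRank_eq (Φ : PolyFlag d P) {x y : Faces d P} (hx : x ∈ Φ) (hy : y ∈ Φ)
    (h : faceRank x.1 = faceRank y.1) : x = y := by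
  rcases Φ.le_or_le hx hy with hxy | hxy
  · exact hxy.eq_of_not_lt fun hlt => (faceRank_strictMono hlt).ne h
  · exact (hxy.eq_of_not_lt fun hlt => (faceRank_strictMono hlt).ne h.symm).symm

theorem IsometryEquiv.image_trans {α β γ : Type*} [PseudoEMetricSpace α] [PseudoEMetricSpace β]
    [PseudoEMetricSpace γ] (g₁ : α ≃ᵢ β) (g₂ : β ≃ᵢ γ) (s : Set α) :
    g₁.trans g₂ '' s = g₂ '' (g₁ '' s) := by
  rw [image_image]; rfl

theorem IsometryEquiv.symm_image_image {α β : Type*} [PseudoEMetricSpace α]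
    [PseudoEMetricSpace β] (g : α ≃ᵢ β) (s : Set α) : g.symm '' (g '' s) = s :=
  g.toEquiv.symm_image_image s

theorem IsSymmetry.symm {g : E d ≃ᵢ E d} (hg : IsSymmetry d P g) : IsSymmetry d P g.symm := by
  have := g.symm_image_image P
  rwa [hg] at this

theorem IsSymmetry.trans {g₁ g₂ : E d ≃ᵢ E d} (h₁ : IsSymmetry d P g₁) (h₂ : IsSymmetry d P g₂) :
    IsSymmetry d P (g₁.trans g₂) := by
  rw [IsSymmetry, IsometryEquiv.image_trans, h₁, h₂]

theorem FlagEquiv.symm {Φ Ψ : PolyFlag d P} (h : FlagEquiv d P Φ Ψ) : FlagEquiv d P Ψ Φ := by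
  obtain ⟨g, hg, him⟩ := h
  refine ⟨g.symm, hg.symm, ?_⟩
  have hid : (fun H => g.symm '' (g '' H)) = id := funext g.symm_image_image
  rw [flagImage, ← him, flagImage, image_image, hid, image_id]

theorem FlagEquiv.trans {Φ Ψ Ω : PolyFlag d P} (h₁ : FlagEquiv d P Φ Ψ) (h₂ : FlagEquiv d P Ψ Ω) :
    FlagEquiv d P Φ Ω := by
  obtain ⟨g₁, hg₁, him₁⟩ := h₁
  obtain ⟨g₂, hg₂, him₂⟩ := h₂
  refine ⟨g₁.trans g₂, hg₁.trans hg₂, ?_⟩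
  have hcomp : (fun H => g₁.trans g₂ '' H) = fun H => g₂ '' (g₁ '' H) :=
    funext (IsometryEquiv.image_trans g₁ g₂)
  rw [flagImage, ← him₂, flagImage, ← him₁, flagImage, image_image, hcomp]

theorem IsTwoOrbit.flagEquiv_or_flagEquiv (h : IsTwoOrbit d P) {Ω Ω' : PolyFlag d P}
    (hne : ¬ FlagEquiv d P Ω Ω') (Λ : PolyFlag d P) :
    FlagEquiv d P Λ Ω ∨ FlagEquiv d P Λ Ω' := by
  obtain ⟨Φ, Ψ, -, hcover⟩ := h
  have hjoin : ∀ {X Y Z : PolyFlag d P}, FlagEquiv d P X Z → FlagEquiv d P Y Z →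
      FlagEquiv d P X Y := fun hX hY => hX.trans hY.symm
  rcases hcover Λ with hΛ | hΛ <;> rcases hcover Ω with hΩ | hΩ <;>
    rcases hcover Ω' with hΩ' | hΩ' <;>
    first
    | exact Or.inl (hjoin hΛ hΩ)
    | exact Or.inr (hjoin hΛ hΩ')
    | exact absurd (hjoin hΩ hΩ') hne

theorem FlagEquiv.exists_image_mem {Λ Θ : PolyFlag d P} (h : FlagEquiv d P Λ Θ)
    {x : Faces d P} (hx : x ∈ Λ) : ∃ g, IsSymmetry d P g ∧ ∃ y ∈ Θ, g '' x.1 = y.1 := by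
  obtain ⟨g, hg, him⟩ := h
  obtain ⟨y, hy, hxy⟩ : g '' x.1 ∈ Subtype.val '' (Θ : Set (Faces d P)) :=
    him ▸ mem_image_of_mem _ (mem_image_of_mem _ hx)
  exact ⟨g, hg, y, hy, hxy.symm⟩

theorem IsTwoOrbit.flagEquiv_of_mem_iff (h : IsTwoOrbit d P) {j : ℤ}
    (hj : ¬ TransitiveOnRank d P j) {Ω Ω' : PolyFlag d P}
    (hshare : ∀ x : Faces d P, faceRank x.1 = j → (x ∈ Ω ↔ x ∈ Ω')) :
    FlagEquiv d P Ω Ω' := by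
  by_contra hne
  have hto : ∀ C, IsFaceOfRank d P C j →
      ∃ g, IsSymmetry d P g ∧ ∃ y ∈ Ω, g '' C = y.1 ∧ faceRank y.1 = j := by
    intro C hC
    obtain ⟨Λ, hΛ⟩ := Flag.exists_mem (⟨C, hC.1⟩ : Faces d P)
    have hrank : ∀ {g : E d ≃ᵢ E d} {y : Faces d P}, g '' C = y.1 → faceRank y.1 = j :=
      fun hy => hy ▸ (faceRank_image _ _).trans hC.faceRank_eq
    rcases h.flagEquiv_or_flagEquiv hne Λ with hΛΩ | hΛΩ
    · obtain ⟨g, hg, y, hy, hgy⟩ := hΛΩ.exists_image_mem hΛ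
      exact ⟨g, hg, y, hy, hgy, hrank hgy⟩
    · obtain ⟨g, hg, y, hy, hgy⟩ := hΛΩ.exists_image_mem hΛ
      exact ⟨g, hg, y, (hshare y (hrank hgy)).2 hy, hgy, hrank hgy⟩
  refine hj fun A B hA hB => ?_
  obtain ⟨gA, hgA, y, hy, hAy, hyj⟩ := hto A hA
  obtain ⟨gB, hgB, z, hz, hBz, hzj⟩ := hto B hB
  have hyz : y = z := Ω.eq_of_faceRank_eq hy hz (hyj.trans hzj.symm)
  refine ⟨gA.trans gB.symm, hgA.trans hgB.symm, ?_⟩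
  rw [IsometryEquiv.image_trans, hAy, hyz, ← hBz, gB.symm_image_image]

end

section

variable {d : ℕ} {P F G : Set (E d)}

def SectionFaces.toFaces (d : ℕ) (P F G : Set (E d)) : SectionFaces d P F G ↪o Faces d P :=
  .ofMapLEIff (fun H => ⟨H.1, H.2.1⟩) fun _ _ => Iff.rfl

theorem SectionFaces.range_toFaces (hF : IsExposed ℝ P F) (hG : IsExposed ℝ P G) :
    range (SectionFaces.toFaces d P F G) = Icc ⟨F, hF⟩ ⟨G, hG⟩ := by
  ext x
  exact ⟨by rintro ⟨H, rfl⟩; exact H.2.2, fun hx => ⟨⟨x.1, x.2, hx⟩, rfl⟩⟩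

theorem SectionFlag.val_image_eq (hF : IsExposed ℝ P F) (hG : IsExposed ℝ P G)
    {Θ : SectionFlag d P F G} {Θ' : PolyFlag d P}
    (h : (Θ' : Set (Faces d P)) ∩ Icc ⟨F, hF⟩ ⟨G, hG⟩ = SectionFaces.toFaces d P F G '' Θ) :
    Subtype.val '' (Θ : Set (SectionFaces d P F G)) =
      Subtype.val '' (Θ' : Set (Faces d P)) ∩ Icc F G :=
  calc Subtype.val '' (Θ : Set (SectionFaces d P F G))
      = Subtype.val '' (SectionFaces.toFaces d P F G '' Θ) :=
        (image_image (fun x : Faces d P => x.1) (SectionFaces.toFaces d P F G) _).symm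
    _ = Subtype.val '' ((Θ' : Set (Faces d P)) ∩ Subtype.val ⁻¹' Icc F G) := congrArg _ h.symm
    _ = Subtype.val '' (Θ' : Set (Faces d P)) ∩ Icc F G := image_inter_preimage _ _ _

theorem preimage_image_Icc_of_image_eq {g : E d ≃ᵢ E d} (hgF : g '' F = F) (hgG : g '' G = G) :
    (fun H => g '' H) ⁻¹' Icc F G = Icc F G := by
  ext H
  have hF' := image_subset_image_iff g.injective (s := F) (t := H)
  have hG' := image_subset_image_iff g.injective (s := H) (t := G)
  rw [hgF] at hF'
  rw [hgG] at hG'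
  exact and_congr hF' hG'

theorem image_eq_self_of_flagImage_eq {g : E d ≃ᵢ E d} {Φ Ψ : PolyFlag d P}
    (him : flagImage d P g Φ = Subtype.val '' (Ψ : Set (Faces d P))) {x : Faces d P}
    (hΦ : x ∈ Φ) (hΨ : x ∈ Ψ) : g '' x.1 = x.1 := by
  obtain ⟨y, hy, hxy⟩ : g '' x.1 ∈ Subtype.val '' (Ψ : Set (Faces d P)) :=
    him ▸ mem_image_of_mem _ (mem_image_of_mem _ hΦ)
  rw [← hxy, Ψ.eq_of_faceRank_eq hy hΨ (by rw [hxy, faceRank_image])]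

variable {j k l : ℤ}

theorem IsTwoOrbit.exists_symmetry_image_sectionFlag (h2 : IsTwoOrbit d P)
    (hj : ¬ TransitiveOnRank d P j) (hF : IsFaceOfRank d P F l) (hG : IsFaceOfRank d P G k)
    (hFG : F ⊆ G) (hjkl : j ≤ l ∨ k ≤ j) (Φ Ψ : SectionFlag d P F G) :
    ∃ g : E d ≃ᵢ E d, IsSymmetry d P g ∧ g '' G = G ∧
      (fun H : Set (E d) => g '' H) '' (Subtype.val '' (Φ : Set (SectionFaces d P F G))) =
        Subtype.val '' (Ψ : Set (SectionFaces d P F G)) := by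
  set a : Faces d P := ⟨F, hF.1⟩
  set b : Faces d P := ⟨G, hG.1⟩
  have he := SectionFaces.range_toFaces hF.1 hG.1
  obtain ⟨M, haM, hbM⟩ := Flag.exists_mem_mem (show a ≤ b from hFG)
  obtain ⟨Φ', hΦout, hΦin⟩ := M.exists_sdiff_Ioo_eq_and_inter_Icc_eq haM hbM he Φ
  obtain ⟨Ψ', hΨout, hΨin⟩ := M.exists_sdiff_Ioo_eq_and_inter_Icc_eq haM hbM he Ψ
  have hshare : ∀ x : Faces d P, faceRank x.1 = j → (x ∈ Φ' ↔ x ∈ Ψ') := by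
    intro x hx
    have hxI : x ∉ Ioo a b := fun hxI => by
      have hax := faceRank_strictMono hxI.1
      have hxb := faceRank_strictMono hxI.2
      simp only [a, b, hF.faceRank_eq, hG.faceRank_eq, hx] at hax hxb
      omega
    simpa [hxI] using Set.ext_iff.1 (hΦout.trans hΨout.symm) x
  obtain ⟨g, hg, him⟩ := h2.flagEquiv_of_mem_iff hj hshare
  have hfix : ∀ x ∈ (M : Set (Faces d P)) \ Ioo a b, g '' x.1 = x.1 := fun x hx =>
    image_eq_self_of_flagImage_eq him (hΦout ▸ hx).1 (hΨout ▸ hx).1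
  have hgF : g '' F = F := hfix a ⟨haM, fun h => h.1.false⟩
  have hgG : g '' G = G := hfix b ⟨hbM, fun h => h.2.false⟩
  refine ⟨g, hg, hgG, ?_⟩
  rw [SectionFlag.val_image_eq hF.1 hG.1 hΦin, SectionFlag.val_image_eq hF.1 hG.1 hΨin, ← him]
  conv_lhs => rw [← preimage_image_Icc_of_image_eq hgF hgG]
  exact image_inter_preimage _ _ _

end

section

variable {d : ℕ} {P A : Set (E d)}

theorem IsConvexPolytope.isExposed_iff_of_isExposed (hP : IsConvexPolytope d P)
    (hA : IsExposed ℝ P A) {H : Set (E d)} :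
    IsExposed ℝ A H ↔ IsExposed ℝ P H ∧ H ⊆ A := by
  obtain ⟨⟨S, rfl⟩, -⟩ := hP
  exact ⟨fun h => ⟨hA.trans_of_convexHull S.finite_toSet h, h.subset⟩,
    fun h => h.1.mono hA.subset h.2⟩

def IsConvexPolytope.facesOrderIsoSectionFaces (hP : IsConvexPolytope d P)
    (hA : IsExposed ℝ P A) : Faces d A ≃o SectionFaces d P ∅ A where
  toFun H := ⟨H.1, ((hP.isExposed_iff_of_isExposed hA).1 H.2).1, empty_subset _, H.2.subset⟩
  invFun H := ⟨H.1, (hP.isExposed_iff_of_isExposed hA).2 ⟨H.2.1, H.2.2.2⟩⟩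
  left_inv _ := rfl
  right_inv _ := rfl
  map_rel_iff' := Iff.rfl

theorem IsConvexPolytope.val_image_map_facesOrderIsoSectionFaces (hP : IsConvexPolytope d P)
    (hA : IsExposed ℝ P A) (Φ : PolyFlag d A) :
    Subtype.val '' (Flag.map (hP.facesOrderIsoSectionFaces hA) Φ : Set (SectionFaces d P ∅ A)) =
      Subtype.val '' (Φ : Set (Faces d A)) := by
  rw [Flag.coe_map]
  exact image_image _ _ _

theorem IsTwoOrbit.isRegularSet_of_faceRank_le (hP : IsConvexPolytope d P) (h2 : IsTwoOrbit d P)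
    {i j : ℤ} (hj : ¬ TransitiveOnRank d P j) (hij : i ≤ j) (hA : IsFaceOfRank d P A i) :
    IsRegularSet d A := by
  intro Φ Ψ
  have hempty : IsFaceOfRank d P ∅ (-1) := ⟨isExposed_empty, .inl ⟨rfl, rfl⟩⟩
  obtain ⟨g, -, hgA, him⟩ := h2.exists_symmetry_image_sectionFlag hj hempty hA (empty_subset A)
    (.inr hij) (Flag.map (hP.facesOrderIsoSectionFaces hA.1) Φ)
    (Flag.map (hP.facesOrderIsoSectionFaces hA.1) Ψ)
  rw [hP.val_image_map_facesOrderIsoSectionFaces, hP.val_image_map_facesOrderIsoSectionFaces]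
    at him
  exact ⟨g, hgA, him⟩

end

/-- **Claim 6, first part.**
Let `P` be a two-orbit `j`-intransitive convex `d`-polytope, `G` a `k`-face and `F` an
`l`-face of `P` with `F ⊆ G`.  If `j ≤ l` or `k ≤ j`, then the section `G/F` is
regular: here, any two of its flags are related by a symmetry of `P`.  In particular,
every `i`-face of `P` with `i ≤ j` is a regular polytope. -/
theorem section_regular_of_rank_outside (d : ℕ) (P : Set (E d))
    (hP : IsConvexPolytope d P) (j : ℤ) (hPj : IsJIntransitive d P j)
    (k l : ℤ) (F G : Set (E d))
    (hF : IsFaceOfRank d P F l) (hG : IsFaceOfRank d P G k) (hFG : F ⊆ G)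
    (hjkl : j ≤ l ∨ k ≤ j) :
    (∀ Φ Ψ : SectionFlag d P F G,
      ∃ g : E d ≃ᵢ E d, IsSymmetry d P g ∧
        (fun H : Set (E d) => g '' H) ''
            (Subtype.val '' (Φ : Set (SectionFaces d P F G))) =
          Subtype.val '' (Ψ : Set (SectionFaces d P F G))) ∧
    (∀ (i : ℤ), i ≤ j → ∀ Fi : Set (E d), IsFaceOfRank d P Fi i →
      IsRegularSet d Fi) := by
  obtain ⟨h2, hj, -⟩ := hPj
  refine ⟨fun Φ Ψ => ?_, fun i hij Fi hFi => h2.isRegularSet_of_faceRank_le hP hj hij hFi⟩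
  obtain ⟨g, hg, -, him⟩ := h2.exists_symmetry_image_sectionFlag hj hF hG hFG hjkl Φ Ψ
  exact ⟨g, hg, him⟩
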